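/- (Stone–Weierstrass for Clifford-valued functions, even case.) Suppose n = p + q is even. Let Cl = ℝ_{p,q} be equipped with its canonical topology as a finite-dimensional real vector space (i.e. a topology making it a topological ring and for which the ℝ-module topology condition IsModuleTopology ℝ Cl holds). Let Y be a compact Hausdorff topological space and let A be an ℝ-subalgebra of the algebra C(Y, Cl) of continuous functions from Y to Cl such that A contains every constant function (with arbitrary value in Cl) and A separates the points of Y (for all x ≠ y in Y there exists f ∈ A with f x ≠ f y). Then A is dense in C(Y, Cl) for the topology of uniform convergence (equivalently, the topological closure of A is all of C(Y, Cl)). -/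

import Mathlib

noncomputable section

/-- The weights of the quadratic form of signature `(p, q)`: `1` for the first `p`
coordinates and `-1` for the remaining ones. -/
def cliffordWeight (p : ℕ) {n : ℕ} (i : Fin n) : ℝ := if (i : ℕ) < p then 1 else -1

/-- The quadratic form of signature `(p, q)` on `Fin (p + q) → ℝ`. -/
def cliffordQ (p q : ℕ) : QuadraticForm ℝ (Fin (p + q) → ℝ) :=
  QuadraticMap.weightedSumSquares ℝ (cliffordWeight p)

/-- The generator `e i` of the Clifford algebra `ℝ_{p,q}`. -/
def cliffordE (p q : ℕ) (i : Fin (p + q)) : CliffordAlgebra (cliffordQ p q) :=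
  CliffordAlgebra.ι (cliffordQ p q) (Pi.single i 1)

/-- `e_J`: the product of the generators `e j` for `j ∈ J`, in increasing order. -/
def eLower (p q : ℕ) (J : Finset (Fin (p + q))) : CliffordAlgebra (cliffordQ p q) :=
  ((J.sort (· ≤ ·)).map (cliffordE p q)).prod

/-- `e^J`: the product of the elements `w j • e j` for `j ∈ J`, in decreasing order. -/
def eUpper (p q : ℕ) (J : Finset (Fin (p + q))) : CliffordAlgebra (cliffordQ p q) :=
  ((J.sort (· ≤ ·)).reverse.map (fun j => cliffordWeight p j • cliffordE p q j)).prod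

/-!
Conjugation by a generator `e i` multiplies a monomial `e_{i₁} ⋯ e_{iₖ}` by
`(-1) ^ #{j | i_j ≠ i}`, so the averaging map `T x = ∑_J e_J x e^J` multiplies it by
`∏ i, (1 + (-1) ^ #{j | i_j ≠ i})`. When `n` is even this vanishes unless every index occurs an
even number of times, hence `T` takes values in `ℝ • 1` and `T (e^K e_J) = 2 ^ n δ_{KJ}`; in
particular `x ≠ 0` forces `T (e^K x) ≠ 0` for some `K`. For `f ∈ A` the real-valued function
`y ↦ T (c * f y) = ∑_J e_J c f(y) e^J` lies in `A`, as `A` contains the constants, and these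
functions separate points. The real Stone–Weierstrass theorem then puts every real-valued function
into the closure of `A`, and together with the constants these span `C(Y, Cl)`.
-/

section Sandwich

variable {B : Type*} [Ring B] [Algebra ℝ B] [TopologicalSpace B] [IsTopologicalRing B]
  [IsModuleTopology ℝ B] (Y : Type*) [TopologicalSpace Y]

namespace ContinuousMap

variable (B) in
abbrev algebraMapComp : C(Y, ℝ) →ₐ[ℝ] C(Y, B) :=
  (Algebra.ofId ℝ B).compLeftContinuous ℝ (continuous_algebraMap ℝ B)

variable {Y}

@[simp] theorem algebraMapComp_apply (r : C(Y, ℝ)) (y : Y) :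
    algebraMapComp B Y r y = algebraMap ℝ B (r y) := rfl

theorem continuous_algebraMapComp : Continuous (algebraMapComp B Y) :=
  continuous_postcomp ⟨algebraMap ℝ B, continuous_algebraMap ℝ B⟩

theorem subalgebra_eq_top_of_const_mem_of_algebraMapComp_mem [Module.Finite ℝ B]
    (A : Subalgebra ℝ C(Y, B)) (hconst : ∀ c, const Y c ∈ A)
    (hscalar : ∀ r, algebraMapComp B Y r ∈ A) : A = ⊤ := by
  refine eq_top_iff.mpr fun f _ => ?_
  let b := Module.finBasis ℝ B
  have hf : f = ∑ i, algebraMapComp B Y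
      ((⟨b.coord i, IsModuleTopology.continuous_of_linearMap _⟩ : C(B, ℝ)).comp f) *
        const Y (b i) := by
    ext y
    conv_lhs => rw [← b.sum_repr (f y)]
    simp [Algebra.smul_def]
  rw [hf]
  exact sum_mem fun i _ => mul_mem (hscalar _) (hconst _)

theorem subalgebra_topologicalClosure_eq_top_of_sandwich [Module.Finite ℝ B] [CompactSpace Y]
    [T2Space Y] {ι : Type*} [Fintype ι] (a b : ι → B) (τ : B →ₗ[ℝ] ℝ)
    (hτ : ∀ x, ∑ i, a i * x * b i = algebraMap ℝ B (τ x))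
    (hτ_nondeg : ∀ x ≠ 0, ∃ c, τ (c * x) ≠ 0)
    (A : Subalgebra ℝ C(Y, B)) (hconst : ∀ c, const Y c ∈ A)
    (hsep : ∀ x y : Y, x ≠ y → ∃ f ∈ A, f x ≠ f y) :
    A.topologicalClosure = ⊤ := by
  set S := A.comap (algebraMapComp B Y)
  have hS : S.SeparatesPoints := by
    intro x y hxy
    obtain ⟨f, hf, hfxy⟩ := hsep x y hxy
    obtain ⟨c, hc⟩ := hτ_nondeg _ (sub_ne_zero.mpr hfxy)
    let r : C(Y, ℝ) := ⟨fun y => τ (c * f y),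
      (IsModuleTopology.continuous_of_linearMap τ).comp (continuous_const.mul f.continuous)⟩
    have hr : algebraMapComp B Y r = ∑ i, const Y (a i * c) * f * const Y (b i) := by
      ext y
      simp [r, ← hτ, mul_assoc]
    refine ⟨r, ⟨r, ?_, rfl⟩, ?_⟩
    · show algebraMapComp B Y r ∈ A
      rw [hr]
      exact sum_mem fun i _ => mul_mem (mul_mem (hconst _) hf) (hconst _)
    · simpa [r, mul_sub, sub_eq_zero] using hc
  have hscalar (r : C(Y, ℝ)) : algebraMapComp B Y r ∈ A.topologicalClosure := by
    refine map_mem_closure (s := (S : Set C(Y, ℝ))) (t := (A : Set C(Y, B)))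
      continuous_algebraMapComp ?_ fun _ hr => hr
    rw [← Subalgebra.topologicalClosure_coe,
      subalgebra_topologicalClosure_eq_top_of_separatesPoints S hS]
    trivial
  exact subalgebra_eq_top_of_const_mem_of_algebraMapComp_mem _
    (fun c => A.le_topologicalClosure (hconst c)) hscalar

end ContinuousMap

end Sandwich

theorem Subalgebra.exists_linearMap_eq_algebraMap_of_mem_bot {K B : Type*} [Field K] [Ring B]
    [Nontrivial B] [Algebra K B] (T : B →ₗ[K] B) (hT : ∀ x, T x ∈ (⊥ : Subalgebra K B)) :
    ∃ τ : B →ₗ[K] K, ∀ x, T x = algebraMap K B (τ x) := by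
  refine ⟨(Algebra.botEquiv K B).toLinearMap ∘ₗ T.codRestrict (Subalgebra.toSubmodule ⊥) hT,
    fun x => ?_⟩
  have h := (Algebra.botEquiv K B).symm_apply_apply ⟨T x, hT x⟩
  rw [Algebra.botEquiv_symm_apply] at h
  exact (congrArg Subtype.val h).symm

theorem List.even_count_of_forall_even_countP_ne {α : Type*} [Fintype α] [DecidableEq α]
    (hα : Even (Fintype.card α)) {m : List α} (hm : ∀ i, Even (m.countP (· ≠ i))) (i : α) :
    Even (m.count i) := by
  have hsplit (j : α) : m.countP (· ≠ j) + m.count j = m.length := by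
    rw [List.length_eq_countP_add_countP (· ≠ j), List.count_eq_countP]
    exact congrArg _ (List.countP_congr fun x _ => by simp)
  rcases Nat.even_or_odd m.length with hlen | hlen
  · exact (Nat.even_add.mp (hsplit i ▸ hlen)).mp (hm i)
  · have hodd (j : α) : Odd (m.count j) := (Nat.odd_add'.mp (hsplit j ▸ hlen)).mpr (hm j)
    have hsum : ∑ j, m.count j = m.length := by
      simpa using Multiset.sum_count_eq_card (s := Finset.univ) (m := (m : Multiset α)) (by simp)
    rw [← hsum, Finset.odd_sum_iff_odd_card_odd] at hlen
    simp [hodd, Nat.not_odd_iff_even.mpr hα] at hlen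

theorem Finset.count_sort {α : Type*} [LinearOrder α] (s : Finset α) (a : α) :
    (s.sort (· ≤ ·)).count a = if a ∈ s then 1 else 0 := by
  split_ifs with ha
  · exact List.count_eq_one_of_mem (s.sort_nodup _) ((s.mem_sort _).mpr ha)
  · exact List.count_eq_zero.mpr ((s.mem_sort _).not.mpr ha)

section Clifford

variable (p q : ℕ)

theorem cliffordWeight_mul_self (i : Fin (p + q)) :
    cliffordWeight p i * cliffordWeight p i = 1 := by
  unfold cliffordWeight
  split_ifs <;> norm_num

theorem cliffordQ_single (i : Fin (p + q)) :
    cliffordQ p q (Pi.single i 1) = cliffordWeight p i := by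
  rw [cliffordQ, QuadraticMap.weightedSumSquares_apply, Finset.sum_eq_single i] <;>
    simp +contextual

theorem cliffordE_mul_self (i : Fin (p + q)) :
    cliffordE p q i * cliffordE p q i = cliffordWeight p i • 1 := by
  rw [cliffordE, CliffordAlgebra.ι_sq_scalar, cliffordQ_single, Algebra.algebraMap_eq_smul_one]

theorem cliffordE_mul_smul_cliffordE_self (i : Fin (p + q)) :
    cliffordE p q i * (cliffordWeight p i • cliffordE p q i) = 1 := by
  rw [mul_smul_comm, cliffordE_mul_self, smul_smul, cliffordWeight_mul_self, one_smul]

theorem smul_cliffordE_mul_cliffordE_self (i : Fin (p + q)) :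
    (cliffordWeight p i • cliffordE p q i) * cliffordE p q i = 1 := by
  rw [smul_mul_assoc, cliffordE_mul_self, smul_smul, cliffordWeight_mul_self, one_smul]

theorem cliffordE_mul_cliffordE_of_ne {i j : Fin (p + q)} (hij : i ≠ j) :
    cliffordE p q i * cliffordE p q j = -(cliffordE p q j * cliffordE p q i) := by
  refine CliffordAlgebra.ι_mul_ι_comm_of_isOrtho ?_
  rw [QuadraticMap.isOrtho_def, cliffordQ]
  simp only [QuadraticMap.weightedSumSquares_apply, ← Finset.sum_add_distrib]
  refine Finset.sum_congr rfl fun k _ => ?_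
  rcases eq_or_ne k i with rfl | hki <;> rcases eq_or_ne k j with rfl | hkj <;>
    simp_all

theorem cliffordE_mul_cliffordE (i j : Fin (p + q)) :
    cliffordE p q i * cliffordE p q j =
      (-1 : ℝ) ^ (if j ≠ i then 1 else 0) • (cliffordE p q j * cliffordE p q i) := by
  rcases eq_or_ne j i with rfl | hji
  · simp
  · simp [hji, cliffordE_mul_cliffordE_of_ne p q hji.symm]

theorem ι_eq_sum_smul_cliffordE (v : Fin (p + q) → ℝ) :
    CliffordAlgebra.ι (cliffordQ p q) v = ∑ i, v i • cliffordE p q i := by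
  conv_lhs => rw [← Finset.univ_sum_single v]
  simp only [map_sum, cliffordE, ← map_smul, ← Pi.single_smul', smul_eq_mul, mul_one]

def cliffordProd (l : List (Fin (p + q))) : CliffordAlgebra (cliffordQ p q) :=
  (l.map (cliffordE p q)).prod

def cliffordProdInv (l : List (Fin (p + q))) : CliffordAlgebra (cliffordQ p q) :=
  (l.reverse.map fun j => cliffordWeight p j • cliffordE p q j).prod

@[simp] theorem cliffordProd_nil : cliffordProd p q [] = 1 := rfl

@[simp] theorem cliffordProd_cons (i : Fin (p + q)) (l : List (Fin (p + q))) :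
    cliffordProd p q (i :: l) = cliffordE p q i * cliffordProd p q l := List.prod_cons

@[simp] theorem cliffordProd_append (l m : List (Fin (p + q))) :
    cliffordProd p q (l ++ m) = cliffordProd p q l * cliffordProd p q m := by
  simp [cliffordProd]

theorem eLower_eq_cliffordProd (J : Finset (Fin (p + q))) :
    eLower p q J = cliffordProd p q (J.sort (· ≤ ·)) := rfl

theorem eUpper_eq_cliffordProdInv (J : Finset (Fin (p + q))) :
    eUpper p q J = cliffordProdInv p q (J.sort (· ≤ ·)) := rfl

theorem cliffordProdInv_mul_cliffordProd (l : List (Fin (p + q))) :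
    cliffordProdInv p q l * cliffordProd p q l = 1 := by
  induction l with
  | nil => simp [cliffordProdInv]
  | cons a t ih =>
    simp only [cliffordProdInv, List.reverse_cons, List.map_append, List.prod_append,
      List.map_singleton, List.prod_singleton, cliffordProd_cons] at ih ⊢
    rw [mul_assoc, ← mul_assoc _ (cliffordE p q a), smul_cliffordE_mul_cliffordE_self, one_mul,
      ih]

theorem cliffordProdInv_eq_smul (l : List (Fin (p + q))) :
    cliffordProdInv p q l = (l.map (cliffordWeight p)).prod • cliffordProd p q l.reverse := by
  induction l with
  | nil => simp [cliffordProdInv]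
  | cons a t ih =>
    simp only [cliffordProdInv, List.reverse_cons, List.map_append, List.prod_append,
      List.map_singleton, List.prod_singleton, cliffordProd_append] at ih ⊢
    rw [ih, smul_mul_smul_comm, List.map_cons, List.prod_cons, mul_comm]
    simp [cliffordProd]

theorem exists_cliffordE_mul_cliffordProd_eq_smul (i : Fin (p + q)) :
    ∀ l : List (Fin (p + q)), l.Pairwise (· < ·) → ∃ (c : ℝ) (l' : List (Fin (p + q))),
      l'.Pairwise (· < ·) ∧ l' ⊆ i :: l ∧
        cliffordE p q i * cliffordProd p q l = c • cliffordProd p q l'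
  | [], _ => ⟨1, [i], by simp, by simp, by simp⟩
  | a :: t, hl => by
    obtain ⟨hat, ht⟩ := List.pairwise_cons.mp hl
    rcases lt_trichotomy i a with hia | rfl | hai
    · refine ⟨1, i :: a :: t, List.pairwise_cons.mpr ⟨?_, hl⟩, by simp, by simp⟩
      rintro b (_ | ⟨_, hb⟩)
      exacts [hia, hia.trans (hat b hb)]
    · refine ⟨cliffordWeight p i, t, ht, fun x hx => by simp [hx], ?_⟩
      rw [cliffordProd_cons, ← mul_assoc, cliffordE_mul_self, smul_one_mul]
    · obtain ⟨c, t', ht', hsub, heq⟩ := exists_cliffordE_mul_cliffordProd_eq_smul i t ht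
      refine ⟨-c, a :: t', List.pairwise_cons.mpr ⟨fun b hb => ?_, ht'⟩, ?_, ?_⟩
      · rcases List.mem_cons.mp (hsub hb) with rfl | hb
        exacts [hai, hat b hb]
      · rintro x (_ | ⟨_, hx⟩)
        · simp
        · rcases List.mem_cons.mp (hsub hx) with rfl | hx <;> simp [*]
      · rw [cliffordProd_cons, ← mul_assoc, cliffordE_mul_cliffordE_of_ne p q hai.ne', neg_mul,
          mul_assoc, heq, mul_smul_comm, neg_smul, cliffordProd_cons]

theorem cliffordProd_mem_span_eLower {l : List (Fin (p + q))} (hl : l.Pairwise (· < ·)) :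
    cliffordProd p q l ∈ Submodule.span ℝ (Set.range (eLower p q)) := by
  have : l.toFinset.sort (· ≤ ·) = l :=
    List.Perm.eq_of_pairwise' (Finset.pairwise_sort _ _) (hl.imp le_of_lt)
      (List.perm_of_nodup_nodup_toFinset_eq (Finset.sort_nodup _ _) hl.sortedLT.nodup
        (Finset.sort_toFinset _ _))
  rw [← this]
  exact Submodule.subset_span ⟨_, rfl⟩

theorem cliffordE_mul_mem_span_eLower (i : Fin (p + q)) {x : CliffordAlgebra (cliffordQ p q)}
    (hx : x ∈ Submodule.span ℝ (Set.range (eLower p q))) :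
    cliffordE p q i * x ∈ Submodule.span ℝ (Set.range (eLower p q)) := by
  induction hx using Submodule.span_induction with
  | mem _ hx =>
    obtain ⟨J, rfl⟩ := hx
    obtain ⟨c, l', hl', -, heq⟩ :=
      exists_cliffordE_mul_cliffordProd_eq_smul p q i _ (Finset.sortedLT_sort J).pairwise
    rw [eLower_eq_cliffordProd, heq]
    exact Submodule.smul_mem _ _ (cliffordProd_mem_span_eLower p q hl')
  | zero => simp
  | add _ _ _ _ hx hy => rw [mul_add]; exact Submodule.add_mem _ hx hy
  | smul r _ _ hx => rw [mul_smul_comm]; exact Submodule.smul_mem _ r hx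

theorem span_eLower_eq_top : Submodule.span ℝ (Set.range (eLower p q)) = ⊤ := by
  suffices h : ∀ x y, y ∈ Submodule.span ℝ (Set.range (eLower p q)) →
      x * y ∈ Submodule.span ℝ (Set.range (eLower p q)) by
    refine eq_top_iff.mpr fun x _ => mul_one x ▸ h x 1 (Submodule.subset_span ⟨∅, ?_⟩)
    simp [eLower_eq_cliffordProd]
  intro x
  induction x using CliffordAlgebra.induction with
  | algebraMap r =>
    intro y hy
    rw [Algebra.algebraMap_eq_smul_one, smul_one_mul]
    exact Submodule.smul_mem _ r hy
  | ι v =>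
    intro y hy
    rw [ι_eq_sum_smul_cliffordE, Finset.sum_mul]
    exact Submodule.sum_mem _ fun i _ => smul_mul_assoc (v i) (cliffordE p q i) y ▸
      Submodule.smul_mem _ _ (cliffordE_mul_mem_span_eLower p q i hy)
  | mul a b ha hb => intro y hy; rw [mul_assoc]; exact ha _ (hb y hy)
  | add a b ha hb => intro y hy; rw [add_mul]; exact Submodule.add_mem _ (ha y hy) (hb y hy)

instance : Module.Finite ℝ (CliffordAlgebra (cliffordQ p q)) :=
  ⟨span_eLower_eq_top p q ▸ Submodule.fg_span (Set.finite_range _)⟩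

theorem cliffordE_mul_cliffordProd_mul_smul_cliffordE (i : Fin (p + q)) (m : List (Fin (p + q))) :
    cliffordE p q i * cliffordProd p q m * (cliffordWeight p i • cliffordE p q i) =
      (-1 : ℝ) ^ m.countP (· ≠ i) • cliffordProd p q m := by
  induction m with
  | nil =>
    simp only [cliffordProd_nil, mul_one, cliffordE_mul_smul_cliffordE_self, List.countP_nil,
      pow_zero, one_smul]
  | cons a t ih =>
    calc cliffordE p q i * cliffordProd p q (a :: t) * (cliffordWeight p i • cliffordE p q i)
        = (cliffordE p q i * cliffordE p q a) * cliffordProd p q t *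
            (cliffordWeight p i • cliffordE p q i) := by
          rw [cliffordProd_cons, ← mul_assoc (cliffordE p q i)]
      _ = (-1 : ℝ) ^ (if a ≠ i then 1 else 0) • (cliffordE p q a *
            (cliffordE p q i * cliffordProd p q t * (cliffordWeight p i • cliffordE p q i))) := by
          rw [cliffordE_mul_cliffordE]; simp only [smul_mul_assoc, mul_assoc]
      _ = _ := by
          rw [ih, mul_smul_comm, smul_smul, ← pow_add, List.countP_cons, cliffordProd_cons]
          simp [add_comm]

theorem cliffordProd_mul_mul_cliffordProdInv (l m : List (Fin (p + q))) :
    cliffordProd p q l * cliffordProd p q m * cliffordProdInv p q l =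
      (l.map fun i => (-1 : ℝ) ^ m.countP (· ≠ i)).prod • cliffordProd p q m := by
  induction l with
  | nil => simp [cliffordProdInv]
  | cons a t ih =>
    have hinv : cliffordProdInv p q (a :: t) =
        cliffordProdInv p q t * (cliffordWeight p a • cliffordE p q a) := by
      simp [cliffordProdInv]
    calc cliffordProd p q (a :: t) * cliffordProd p q m * cliffordProdInv p q (a :: t)
        = cliffordE p q a * (cliffordProd p q t * cliffordProd p q m * cliffordProdInv p q t) *
            (cliffordWeight p a • cliffordE p q a) := by
          rw [hinv, cliffordProd_cons]; simp only [mul_assoc]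
      _ = _ := by
          rw [ih, mul_smul_comm _ (cliffordE p q a), smul_mul_assoc,
            cliffordE_mul_cliffordProd_mul_smul_cliffordE,
            smul_smul, List.map_cons, List.prod_cons, mul_comm]

theorem eLower_mul_mul_eUpper (J : Finset (Fin (p + q))) (m : List (Fin (p + q))) :
    eLower p q J * cliffordProd p q m * eUpper p q J =
      (∏ i ∈ J, (-1 : ℝ) ^ m.countP (· ≠ i)) • cliffordProd p q m := by
  rw [eLower_eq_cliffordProd, eUpper_eq_cliffordProdInv, cliffordProd_mul_mul_cliffordProdInv,
    Finset.prod_eq_multiset_prod, ← Finset.sort_eq J (· ≤ ·), Multiset.map_coe,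
    Multiset.prod_coe]

def cliffordAverage : CliffordAlgebra (cliffordQ p q) →ₗ[ℝ] CliffordAlgebra (cliffordQ p q) :=
  ∑ J, LinearMap.mulLeftRight ℝ (eLower p q J, eUpper p q J)

theorem cliffordAverage_apply (x : CliffordAlgebra (cliffordQ p q)) :
    cliffordAverage p q x = ∑ J, eLower p q J * x * eUpper p q J := by
  simp [cliffordAverage, LinearMap.mulLeftRight_apply]

theorem cliffordAverage_cliffordProd (m : List (Fin (p + q))) :
    cliffordAverage p q (cliffordProd p q m) =
      (∏ i, (1 + (-1 : ℝ) ^ m.countP (· ≠ i))) • cliffordProd p q m := by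
  simp only [cliffordAverage_apply, eLower_mul_mul_eUpper, ← Finset.sum_smul, Finset.prod_one_add,
    Finset.powerset_univ]

theorem cliffordAverage_cliffordProd_eq_zero (h : Even (p + q)) {m : List (Fin (p + q))}
    (hm : ∃ i, Odd (m.count i)) : cliffordAverage p q (cliffordProd p q m) = 0 := by
  obtain ⟨i, hi⟩ := hm
  obtain ⟨j, hj⟩ : ∃ j, Odd (m.countP (· ≠ j)) := by
    by_contra! hall
    simp only [Nat.not_odd_iff_even] at hall
    exact Nat.not_odd_iff_even.mpr
      (List.even_count_of_forall_even_countP_ne (by simpa using h) hall i) hi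
  rw [cliffordAverage_cliffordProd, Finset.prod_eq_zero (Finset.mem_univ j)
    (by rw [hj.neg_one_pow, add_neg_cancel]), zero_smul]

theorem cliffordAverage_one : cliffordAverage p q 1 = (2 : ℝ) ^ (p + q) • 1 := by
  simpa [one_add_one_eq_two] using cliffordAverage_cliffordProd p q []

theorem cliffordAverage_eLower_eq_zero (h : Even (p + q)) {J : Finset (Fin (p + q))}
    (hJ : J.Nonempty) : cliffordAverage p q (eLower p q J) = 0 := by
  obtain ⟨i, hi⟩ := hJ
  refine cliffordAverage_cliffordProd_eq_zero p q h ⟨i, ?_⟩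
  simp [hi]

theorem cliffordAverage_mem_bot (h : Even (p + q)) (x : CliffordAlgebra (cliffordQ p q)) :
    cliffordAverage p q x ∈ (⊥ : Subalgebra ℝ (CliffordAlgebra (cliffordQ p q))) := by
  suffices Submodule.map (cliffordAverage p q) ⊤ ≤ Subalgebra.toSubmodule ⊥ from
    this ⟨x, trivial, rfl⟩
  rw [← span_eLower_eq_top, Submodule.map_span_le]
  rintro _ ⟨J, rfl⟩
  rcases J.eq_empty_or_nonempty with rfl | hJ
  · rw [eLower_eq_cliffordProd, Finset.sort_empty, cliffordProd_nil, cliffordAverage_one]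
    exact Subalgebra.smul_mem _ (one_mem _) _
  · rw [cliffordAverage_eLower_eq_zero p q h hJ]
    exact zero_mem _

theorem cliffordAverage_eUpper_mul_eLower (h : Even (p + q)) (K J : Finset (Fin (p + q))) :
    cliffordAverage p q (eUpper p q K * eLower p q J) =
      if K = J then (2 : ℝ) ^ (p + q) • 1 else 0 := by
  split_ifs with hKJ
  · rw [hKJ, eUpper_eq_cliffordProdInv, eLower_eq_cliffordProd, cliffordProdInv_mul_cliffordProd,
      cliffordAverage_one]
  obtain ⟨i, hi⟩ : ∃ i, ¬(i ∈ K ↔ i ∈ J) := by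
    by_contra! hall
    exact hKJ (Finset.ext hall)
  rw [eUpper_eq_cliffordProdInv, cliffordProdInv_eq_smul, smul_mul_assoc, eLower_eq_cliffordProd,
    ← cliffordProd_append, map_smul, cliffordAverage_cliffordProd_eq_zero p q h ⟨i, ?_⟩,
    smul_zero]
  rw [List.count_append, List.count_reverse, Finset.count_sort, Finset.count_sort]
  by_cases hiK : i ∈ K <;> simp_all

theorem sum_cliffordAverage_eUpper_mul_mul_eLower (h : Even (p + q))
    (x : CliffordAlgebra (cliffordQ p q)) :
    ∑ K, cliffordAverage p q (eUpper p q K * x) * eLower p q K = (2 : ℝ) ^ (p + q) • x := by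
  have hx : x ∈ Submodule.span ℝ (Set.range (eLower p q)) := span_eLower_eq_top p q ▸ trivial
  induction hx using Submodule.span_induction with
  | mem _ hx =>
    obtain ⟨J, rfl⟩ := hx
    simp [cliffordAverage_eUpper_mul_eLower p q h, ite_mul]
  | zero => simp
  | add x y _ _ hx hy =>
    simp only [mul_add, map_add, add_mul, Finset.sum_add_distrib, hx, hy, smul_add]
  | smul r x _ hx =>
    simp only [mul_smul_comm, map_smul, smul_mul_assoc, ← Finset.smul_sum, hx, smul_comm r]

theorem exists_cliffordAverage_eUpper_mul_ne_zero (h : Even (p + q))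
    {x : CliffordAlgebra (cliffordQ p q)} (hx : x ≠ 0) :
    ∃ K, cliffordAverage p q (eUpper p q K * x) ≠ 0 := by
  by_contra! hall
  have := sum_cliffordAverage_eUpper_mul_mul_eLower p q h x
  simp only [hall, zero_mul, Finset.sum_const_zero] at this
  exact hx ((smul_eq_zero.mp this.symm).resolve_left (by positivity))

end Clifford

theorem stoneWeierstrass_clifford_even (p q : ℕ) (h : Even (p + q))
    [TopologicalSpace (CliffordAlgebra (cliffordQ p q))]
    [IsTopologicalRing (CliffordAlgebra (cliffordQ p q))]
    [IsModuleTopology ℝ (CliffordAlgebra (cliffordQ p q))]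
    (Y : Type) [TopologicalSpace Y] [CompactSpace Y] [T2Space Y]
    (A : Subalgebra ℝ C(Y, CliffordAlgebra (cliffordQ p q)))
    (hconst : ∀ c : CliffordAlgebra (cliffordQ p q), ContinuousMap.const Y c ∈ A)
    (hsep : ∀ x y : Y, x ≠ y → ∃ f ∈ A, f x ≠ f y) :
    closure (A : Set C(Y, CliffordAlgebra (cliffordQ p q))) = Set.univ := by
  obtain ⟨τ, hτ⟩ :=
    Subalgebra.exists_linearMap_eq_algebraMap_of_mem_bot _ (cliffordAverage_mem_bot p q h)
  have hτ_nondeg (x : CliffordAlgebra (cliffordQ p q)) (hx : x ≠ 0) :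
      ∃ c, τ (c * x) ≠ 0 := by
    obtain ⟨K, hK⟩ := exists_cliffordAverage_eUpper_mul_ne_zero p q h hx
    exact ⟨eUpper p q K, fun h0 => hK (by rw [hτ, h0, map_zero])⟩
  have htop := ContinuousMap.subalgebra_topologicalClosure_eq_top_of_sandwich
    (eLower p q) (eUpper p q) τ (fun x => (cliffordAverage_apply p q x).symm.trans (hτ x))
    hτ_nondeg A hconst hsep
  rw [← Subalgebra.topologicalClosure_coe, htop, Algebra.coe_top]
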